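/- Let G be a torsion-free group in which every two non-commuting elements x, y have the property that ⟨x^n, y^n⟩ is free of rank 2 for some fixed n = n_G ≥ 1. Then every finitely generated subgroup H ≤ G is either abelian or has uniform exponential growth: ent(H) ≥ (1/n_G)·log 3. -/

import Mathlib

open Filter Real Topology

/-- The ball of radius `t` in the word metric on `G` associated with the
(symmetrized) generating set `S`. -/
def wordBall {G : Type*} [Group G] (S : Set G) (t : ℕ) : Set G :=
  {g | ∃ l : List G, (∀ x ∈ l, x ∈ S ∨ x⁻¹ ∈ S) ∧ l.length ≤ t ∧ l.prod = g}

/-!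
If `H` is not abelian, two of the generators `x, y ∈ S` do not commute, so `x ^ n` and `y ^ n`,
which have word length at most `n`, freely generate a free group of rank 2. In a reduced word
over two generators every letter can be followed by exactly three letters, so there are `3 ^ m`
reduced words of length `m + 1` starting with a fixed letter; their images are distinct elements
of the ball of radius `n (m + 1)`. Hence `|B_S(t)| ≥ 3 ^ (t / n - 1)`, and since `|B_S(t)|` grows
at most exponentially, `liminf log |B_S(t)| / t ≥ log 3 / n`.
-/

open Pointwise

section WordBall

variable {G : Type*} [Group G] {S : Set G} {a b : ℕ} {g h : G}

theorem one_mem_wordBall (S : Set G) (t : ℕ) : (1 : G) ∈ wordBall S t :=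
  ⟨[], by simp, by simp, by simp⟩

theorem wordBall_mono (hab : a ≤ b) : wordBall S a ⊆ wordBall S b :=
  fun _ ⟨l, hl, hlen, hprod⟩ => ⟨l, hl, hlen.trans hab, hprod⟩

theorem mul_mem_wordBall (hg : g ∈ wordBall S a) (hh : h ∈ wordBall S b) :
    g * h ∈ wordBall S (a + b) := by
  obtain ⟨l, hl, hlen, rfl⟩ := hg
  obtain ⟨l', hl', hlen', rfl⟩ := hh
  refine ⟨l ++ l', ?_, ?_, List.prod_append⟩
  · simpa only [List.mem_append] using fun x hx => hx.elim (hl x) (hl' x)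
  · simpa only [List.length_append] using Nat.add_le_add hlen hlen'

theorem inv_mem_wordBall (hg : g ∈ wordBall S a) : g⁻¹ ∈ wordBall S a := by
  obtain ⟨l, hl, hlen, rfl⟩ := hg
  refine ⟨(l.map (·⁻¹)).reverse, ?_, by simpa using hlen, (List.prod_inv_reverse l).symm⟩
  simp only [List.mem_reverse, List.mem_map]
  rintro _ ⟨x, hx, rfl⟩
  simpa [or_comm] using hl x hx

theorem pow_mem_wordBall (hg : g ∈ S) (n : ℕ) : g ^ n ∈ wordBall S n :=
  ⟨List.replicate n g, by simp_all [List.mem_replicate], by simp, List.prod_replicate n g⟩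

theorem wordBall_subset_pow [DecidableEq G] (S : Finset G) (t : ℕ) :
    wordBall (S : Set G) t ⊆ ↑(insert 1 (S ∪ S⁻¹) ^ t) := by
  rintro _ ⟨l, hl, hlen, rfl⟩
  refine Finset.pow_subset_pow_right (Finset.mem_insert_self _ _) hlen ?_
  clear hlen
  induction l with
  | nil => simp
  | cons x l ih =>
    rw [List.prod_cons, List.length_cons, pow_succ']
    refine Finset.mul_mem_mul ?_ (ih fun y hy => hl y (List.mem_cons_of_mem x hy))
    simpa [Finset.mem_inv] using Or.inr (hl x List.mem_cons_self)

theorem wordBall_finite (S : Finset G) (t : ℕ) : (wordBall (S : Set G) t).Finite := by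
  classical
  exact (Finset.finite_toSet _).subset (wordBall_subset_pow S t)

theorem ncard_wordBall_le [DecidableEq G] (S : Finset G) (t : ℕ) :
    (wordBall (S : Set G) t).ncard ≤ (insert 1 (S ∪ S⁻¹)).card ^ t :=
  calc (wordBall (S : Set G) t).ncard ≤ (↑(insert 1 (S ∪ S⁻¹) ^ t) : Set G).ncard :=
        Set.ncard_le_ncard (wordBall_subset_pow S t) (Finset.finite_toSet _)
    _ ≤ _ := by rw [Set.ncard_coe_finset]; exact Finset.card_pow_le

end WordBall

section FreeGroupGrowth

open FreeGroup

theorem FreeGroup.IsReduced.eq_of_mk_eq_mk {α : Type*} [DecidableEq α]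
    {L₁ L₂ : List (α × Bool)} (h₁ : IsReduced L₁) (h₂ : IsReduced L₂) (h : mk L₁ = mk L₂) :
    L₁ = L₂ := by
  rw [← h₁.reduce_eq, ← h₂.reduce_eq, ← toWord_mk, ← toWord_mk, h]

/-- The three letters that may follow `p` in a reduced word over two generators: `p` itself and
the other generator with either sign. -/
def nextLetter (p : Fin 2 × Bool) : Fin 3 → Fin 2 × Bool
  | 0 => p
  | 1 => (p.1 + 1, true)
  | 2 => (p.1 + 1, false)

theorem nextLetter_injective : ∀ p, Function.Injective (nextLetter p) := by
  unfold Function.Injective; decide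

theorem snd_eq_nextLetter_snd_of_fst_eq :
    ∀ p k, p.1 = (nextLetter p k).1 → p.2 = (nextLetter p k).2 := by
  decide

theorem isReduced_scanl_nextLetter (p : Fin 2 × Bool) (w : List (Fin 3)) :
    IsReduced (w.scanl nextLetter p) := by
  induction w generalizing p with
  | nil => exact IsReduced.singleton
  | cons k w ih =>
    rw [List.scanl_cons, FreeGroup.IsReduced, List.isChain_cons]
    refine ⟨?_, ih _⟩
    intro y hy
    simp only [List.head?_scanl, Option.mem_some_iff] at hy
    exact hy ▸ snd_eq_nextLetter_snd_of_fst_eq p k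

theorem scanl_nextLetter_injective (p : Fin 2 × Bool) :
    Function.Injective (List.scanl nextLetter p) := by
  intro w₁ w₂ h
  induction w₁ generalizing p w₂ with
  | nil => cases w₂ <;> simp_all
  | cons k w₁ ih =>
    cases w₂ with
    | nil => simp at h
    | cons k' w₂ =>
      simp only [List.scanl_cons, List.cons.injEq, true_and] at h
      have hk := nextLetter_injective p (by simpa using congrArg List.head? h)
      subst hk
      rw [ih _ h]

end FreeGroupGrowth

section LowerBound

variable {G : Type*} [Group G]

theorem map_mk_mem_wordBall {α : Type*} {S : Set G} {n : ℕ} (φ : FreeGroup α →* G)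
    (hφ : ∀ i, φ (FreeGroup.of i) ∈ wordBall S n) (L : List (α × Bool)) :
    φ (FreeGroup.mk L) ∈ wordBall S (n * L.length) := by
  induction L with
  | nil => simpa [← FreeGroup.one_eq_mk] using one_mem_wordBall S 0
  | cons x L ih =>
    rw [List.length_cons, mul_add_one, add_comm, ← List.singleton_append, ← FreeGroup.mul_mk,
      map_mul]
    refine mul_mem_wordBall ?_ ih
    obtain ⟨i, _ | _⟩ := x
    · rw [show FreeGroup.mk [(i, false)] = (FreeGroup.of i)⁻¹ from rfl, map_inv]
      exact inv_mem_wordBall (hφ i)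
    · exact hφ i

theorem three_pow_le_ncard_wordBall (S : Finset G) {n : ℕ} (φ : FreeGroup (Fin 2) →* G)
    (hφ : Function.Injective φ) (hgen : ∀ i, φ (FreeGroup.of i) ∈ wordBall (S : Set G) n)
    (m : ℕ) :
    3 ^ m ≤ (wordBall (S : Set G) (n * (m + 1))).ncard := by
  set ψ : (Fin m → Fin 3) → G :=
    fun w => φ (FreeGroup.mk ((List.ofFn w).scanl nextLetter (0, true)))
  have hψ : Function.Injective ψ := fun w₁ w₂ h =>
    List.ofFn_injective <| scanl_nextLetter_injective _ <|
      (isReduced_scanl_nextLetter _ _).eq_of_mk_eq_mk (isReduced_scanl_nextLetter _ _) (hφ h)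
  have hmem : ∀ w, ψ w ∈ wordBall (S : Set G) (n * (m + 1)) := fun w => by
    simpa using map_mk_mem_wordBall φ hgen ((List.ofFn w).scanl nextLetter (0, true))
  calc 3 ^ m = (Set.univ : Set (Fin m → Fin 3)).ncard := by simp [Set.ncard_univ]
    _ ≤ _ := Set.ncard_le_ncard_of_injOn ψ (fun w _ => hmem w) hψ.injOn (wordBall_finite S _)

end LowerBound

theorem le_liminf_log_div_of_pow_le {a : ℕ → ℕ} {c K n : ℕ} (hn : 0 < n) (hc : 0 < c)
    (hlow : ∀ᶠ t in atTop, c ^ (t / n - 1) ≤ a t) (hup : ∀ᶠ t in atTop, a t ≤ K ^ t) :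
    1 / n * log c ≤ liminf (fun t : ℕ => log (a t) / t) atTop := by
  have hlim : Tendsto (fun t : ℕ => (1 / n - 2 / t) * log c) atTop (𝓝 (1 / n * log c)) := by
    simpa using ((tendsto_const_div_atTop_nhds_zero_nat 2).const_sub (1 / (n : ℝ))).mul_const
      (log c)
  rw [← hlim.liminf_eq]
  refine liminf_le_liminf ?_ hlim.isBoundedUnder_ge
    (isCoboundedUnder_ge_of_eventually_le atTop (x := log K) ?_)
  · filter_upwards [hlow, eventually_gt_atTop 0] with t hlow ht
    have hquot : (t : ℝ) / n - 2 ≤ ((t / n - 1 : ℕ) : ℝ) := by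
      have := Nat.sub_one_lt_floor ((t : ℝ) / n)
      rw [Nat.floor_div_eq_div] at this
      have : ((t / n : ℕ) : ℝ) ≤ ((t / n - 1 : ℕ) : ℝ) + 1 := mod_cast le_tsub_add
      linarith
    rw [le_div_iff₀ (by positivity)]
    calc (1 / n - 2 / t) * log c * t = ((t : ℝ) / n - 2) * log c := by field_simp
      _ ≤ ((t / n - 1 : ℕ) : ℝ) * log c := by gcongr
      _ = log (c ^ (t / n - 1)) := (log_pow _ _).symm
      _ ≤ log (a t) := log_le_log (by positivity) (mod_cast hlow)
  · filter_upwards [hlow, hup, eventually_gt_atTop 0] with t hlow hup ht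
    rw [div_le_iff₀ (by positivity), mul_comm, ← log_pow]
    have hpos : 0 < a t := lt_of_lt_of_le (by positivity) hlow
    exact log_le_log (mod_cast hpos) (mod_cast hup)

theorem exists_not_commute_of_closure {G : Type*} [Group G] {S : Set G}
    (h : ¬∀ a ∈ Subgroup.closure S, ∀ b ∈ Subgroup.closure S, Commute a b) :
    ∃ x ∈ S, ∃ y ∈ S, ¬Commute x y := by
  contrapose! h
  have hle := Subgroup.closure_le_centralizer_centralizer S
  exact fun a ha b hb => Set.centralizer_centralizer_comm_of_comm h a (hle ha) b (hle hb)

theorem abelian_or_uniform_growth_general {G : Type*} [Group G]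
    (n : ℕ) (hn : 1 ≤ n)
    (hfree : ∀ x y : G, ¬Commute x y →
      ∃ φ : FreeGroup (Fin 2) →* G, Function.Injective φ ∧
        φ (FreeGroup.of 0) = x ^ n ∧ φ (FreeGroup.of 1) = y ^ n)
    (H : Subgroup G) :
    (∀ a ∈ H, ∀ b ∈ H, Commute a b) ∨
    (∀ S : Finset G, (S : Set G) ⊆ H → Subgroup.closure (S : Set G) = H →
      (1 / n : ℝ) * Real.log 3 ≤
        Filter.liminf
          (fun t : ℕ => Real.log ((wordBall (S : Set G) t).ncard) / t) atTop) := by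
  classical
  by_cases hab : ∀ a ∈ H, ∀ b ∈ H, Commute a b
  · exact Or.inl hab
  refine Or.inr fun S _ hSgen => ?_
  obtain ⟨x, hx, y, hy, hxy⟩ := exists_not_commute_of_closure (hSgen ▸ hab)
  obtain ⟨φ, hφ, hφx, hφy⟩ := hfree x y hxy
  have hgen : ∀ i, φ (FreeGroup.of i) ∈ wordBall (S : Set G) n := by
    intro i
    fin_cases i
    · exact hφx ▸ pow_mem_wordBall hx n
    · exact hφy ▸ pow_mem_wordBall hy n
  refine le_liminf_log_div_of_pow_le hn three_pos ?_
    (Eventually.of_forall (ncard_wordBall_le S))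
  filter_upwards [eventually_ge_atTop n] with t ht
  have hradius : n * (t / n - 1 + 1) ≤ t := by
    rw [Nat.sub_add_cancel (Nat.div_pos ht hn)]
    exact Nat.mul_div_le t n
  exact (three_pow_le_ncard_wordBall S φ hφ hgen _).trans
    (Set.ncard_le_ncard (wordBall_mono hradius) (wordBall_finite S t))

/-- In a torsion-free group where any two non-commuting elements `x, y` are such
that `⟨x^n, y^n⟩` is free of rank 2 (for a fixed `n`), every finitely generated
subgroup is either abelian or has uniform exponential growth at least
`(1/n)·log 3`. -/
theorem abelian_or_uniform_growth {G : Type*} [Group G]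
    (hTF : ∀ g : G, g ≠ 1 → ∀ m : ℕ, 0 < m → g ^ m ≠ 1)
    (n : ℕ) (hn : 1 ≤ n)
    (hfree : ∀ x y : G, ¬Commute x y →
      ∃ φ : FreeGroup (Fin 2) →* G, Function.Injective φ ∧
        φ (FreeGroup.of 0) = x ^ n ∧ φ (FreeGroup.of 1) = y ^ n)
    (H : Subgroup G) :
    (∀ a ∈ H, ∀ b ∈ H, Commute a b) ∨
    (∀ S : Finset G, (S : Set G) ⊆ H → Subgroup.closure (S : Set G) = H →
      (1 / n : ℝ) * Real.log 3 ≤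
        Filter.liminf
          (fun t : ℕ => Real.log ((wordBall (S : Set G) t).ncard) / t) atTop) :=
  abelian_or_uniform_growth_general n hn hfree H
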